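/- Let C ≥ 0 and M ≥ 0 be real numbers, define b(i) = 2√(C/i) + 4M/√i for integers i ≥ 1, and define β_t = 2·∑_{i=1}^t α_t^i · b(i). Then for every integer t ≥ 1, 4√(C/t) + 8M/√t ≤ β_t ≤ 8√(C/t) + 16M/√t. -/

import Mathlib

/-- The learning rate `α_t = (H+1)/(H+t)`. -/
noncomputable def lrate (H t : ℕ) : ℝ := (H + 1) / (H + t)

/-- The weight `α_t^i = α_i · ∏_{j=i+1}^t (1 − α_j)`. -/
noncomputable def lrateW (H t i : ℕ) : ℝ :=
  lrate H i * ∏ j ∈ Finset.Icc (i + 1) t, (1 - lrate H j)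

/-!
Since `b i = (2√C + 4M) / √i`, we have `β_t = 2 (2√C + 4M) S_t` with
`S_t = ∑_{i ≤ t} α_t^i / √i`, and it suffices to show `1/√t ≤ S_t ≤ 2/√t`.
The weights `α_t^i` are nonnegative and sum to one, which gives the lower bound because
`1/√i ≥ 1/√t`. The upper bound follows by induction from the recursion
`S_{t+1} = (1 - α_{t+1}) S_t + α_{t+1} / √(t+1)` and the AM-GM inequality
`2 √t √(t+1) ≤ 2t + 1`.
-/

open Finset Real

lemma lrate_nonneg (H t : ℕ) : 0 ≤ lrate H t := by
  unfold lrate; positivity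

lemma lrate_le_one (H : ℕ) {t : ℕ} (ht : 1 ≤ t) : lrate H t ≤ 1 := by
  unfold lrate
  exact div_le_one_of_le₀ (by exact_mod_cast Nat.add_le_add_left ht H) (by positivity)

lemma lrate_one (H : ℕ) : lrate H 1 = 1 := by
  unfold lrate; push_cast; exact div_self (by positivity)

lemma one_sub_lrate (H t : ℕ) : 1 - lrate H (t + 1) = t / (H + t + 1) := by
  unfold lrate; push_cast; field_simp; ring

lemma lrateW_nonneg (H t i : ℕ) : 0 ≤ lrateW H t i :=
  mul_nonneg (lrate_nonneg H i) <| prod_nonneg fun j hj =>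
    sub_nonneg.mpr (lrate_le_one H (by simp at hj; omega))

lemma lrateW_self (H t : ℕ) : lrateW H t t = lrate H t := by
  simp [lrateW]

lemma lrateW_succ (H : ℕ) {t i : ℕ} (h : i ≤ t) :
    lrateW H (t + 1) i = (1 - lrate H (t + 1)) * lrateW H t i := by
  rw [lrateW, lrateW, prod_Icc_succ_top (by omega)]
  ring

lemma sum_lrateW_mul_succ (H t : ℕ) (f : ℕ → ℝ) :
    ∑ i ∈ Icc 1 (t + 1), lrateW H (t + 1) i * f i =
      (1 - lrate H (t + 1)) * ∑ i ∈ Icc 1 t, lrateW H t i * f i + lrate H (t + 1) * f (t + 1) := by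
  rw [sum_Icc_succ_top (by omega), lrateW_self, mul_sum]
  congr 1
  refine sum_congr rfl fun i hi => ?_
  rw [lrateW_succ H (mem_Icc.mp hi).2, mul_assoc]

lemma sum_lrateW (H : ℕ) {t : ℕ} (ht : 1 ≤ t) : ∑ i ∈ Icc 1 t, lrateW H t i = 1 := by
  induction t, ht using Nat.le_induction with
  | base => simp [lrateW_self, lrate_one]
  | succ t _ ih =>
    simpa [ih] using sum_lrateW_mul_succ H t fun _ => 1

lemma inv_sqrt_le_sum_lrateW_div_sqrt (H : ℕ) {t : ℕ} (ht : 1 ≤ t) :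
    1 / √t ≤ ∑ i ∈ Icc 1 t, lrateW H t i / √i := by
  calc 1 / √t = ∑ i ∈ Icc 1 t, lrateW H t i / √t := by rw [← sum_div, sum_lrateW H ht]
    _ ≤ ∑ i ∈ Icc 1 t, lrateW H t i / √i := by
      refine sum_le_sum fun i hi => ?_
      have hi1 : 1 ≤ i := (mem_Icc.mp hi).1
      have hit : i ≤ t := (mem_Icc.mp hi).2
      gcongr
      exact lrateW_nonneg H t i

lemma two_mul_sqrt_mul_sqrt_succ_le (x : ℝ) (hx : 0 ≤ x) : 2 * (√x * √(x + 1)) ≤ 2 * x + 1 := by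
  rw [← sqrt_mul hx]
  nlinarith [sq_sqrt (mul_nonneg hx (by linarith : (0:ℝ) ≤ x + 1)),
    sq_nonneg (√(x * (x + 1)) - x - 1 / 2)]

lemma one_sub_lrate_mul_two_div_sqrt_add_le (H : ℕ) {t : ℕ} (ht : 1 ≤ t) :
    (1 - lrate H (t + 1)) * (2 / √t) + lrate H (t + 1) * (1 / √(t + 1 : ℕ)) ≤ 2 / √(t + 1 : ℕ) := by
  have hx : 0 < √(t : ℝ) := sqrt_pos.mpr (by exact_mod_cast ht)
  have key : 2 * t * √((t : ℝ) + 1) ≤ (H + 2 * t + 1) * √(t : ℝ) := by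
    have hamgm := two_mul_sqrt_mul_sqrt_succ_le t (Nat.cast_nonneg t)
    have hxx := mul_self_sqrt (Nat.cast_nonneg (α := ℝ) t)
    nlinarith [mul_nonneg (Nat.cast_nonneg (α := ℝ) H) hx.le]
  rw [one_sub_lrate, lrate]
  push_cast
  field_simp
  nlinarith

lemma sum_lrateW_div_sqrt_le (H : ℕ) {t : ℕ} (ht : 1 ≤ t) :
    ∑ i ∈ Icc 1 t, lrateW H t i / √i ≤ 2 / √t := by
  simp only [div_eq_mul_one_div (lrateW H _ _)]
  induction t, ht using Nat.le_induction with
  | base => simp [lrateW_self, lrate_one]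
  | succ t ht ih =>
    rw [sum_lrateW_mul_succ]
    calc _ ≤ (1 - lrate H (t + 1)) * (2 / √t) + lrate H (t + 1) * (1 / √(t + 1 : ℕ)) := by
          gcongr
          exact sub_nonneg.mpr (lrate_le_one H (by omega))
      _ ≤ _ := one_sub_lrate_mul_two_div_sqrt_add_le H ht

theorem stmt_8_general (H : ℕ) (C M : ℝ) (hC : 0 ≤ C) (hM : 0 ≤ M)
    (b : ℕ → ℝ)
    (hb : ∀ i : ℕ, 1 ≤ i → b i = 2 * Real.sqrt (C / i) + 4 * M / Real.sqrt i)
    (β : ℕ → ℝ)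
    (hβ : ∀ t : ℕ, β t = 2 * ∑ i ∈ Finset.Icc 1 t, lrateW H t i * b i)
    (t : ℕ) (ht : 1 ≤ t) :
    4 * Real.sqrt (C / t) + 8 * M / Real.sqrt t ≤ β t ∧
      β t ≤ 8 * Real.sqrt (C / t) + 16 * M / Real.sqrt t := by
  have hβt : β t = (4 * √C + 8 * M) * ∑ i ∈ Icc 1 t, lrateW H t i / √i := by
    rw [hβ, mul_sum, mul_sum]
    refine sum_congr rfl fun i hi => ?_
    rw [hb i (mem_Icc.mp hi).1, sqrt_div hC]
    ring
  rw [hβt, sqrt_div hC]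
  constructor
  · calc 4 * (√C / √t) + 8 * M / √t = (4 * √C + 8 * M) * (1 / √t) := by ring
      _ ≤ _ := by gcongr; exact inv_sqrt_le_sum_lrateW_div_sqrt H ht
  · calc _ ≤ (4 * √C + 8 * M) * (2 / √t) := by gcongr; exact sum_lrateW_div_sqrt_le H ht
      _ = 8 * (√C / √t) + 16 * M / √t := by ring

theorem stmt_8 (H : ℕ) (hH : 1 ≤ H) (C M : ℝ) (hC : 0 ≤ C) (hM : 0 ≤ M)
    (b : ℕ → ℝ)
    (hb : ∀ i : ℕ, 1 ≤ i → b i = 2 * Real.sqrt (C / i) + 4 * M / Real.sqrt i)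
    (β : ℕ → ℝ)
    (hβ : ∀ t : ℕ, β t = 2 * ∑ i ∈ Finset.Icc 1 t, lrateW H t i * b i)
    (t : ℕ) (ht : 1 ≤ t) :
    4 * Real.sqrt (C / t) + 8 * M / Real.sqrt t ≤ β t ∧
      β t ≤ 8 * Real.sqrt (C / t) + 16 * M / Real.sqrt t :=
  stmt_8_general H C M hC hM b hb β hβ t ht
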